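/- arXiv:2208.03286 — 3 statements merged into one kernel-verified Lean document; each statement's English description precedes it below -/
import Mathlib

section
/- Let A₁ = [[a₁,b₁],[c,d₁]] and A₂ = [[a₂,b₂],[c,d₂]] be matrices in SL₂(ℂ) having the same lower-left entry c ≠ 0, and let A₃ = A₂⁻¹A₁, with entries A₃ = [[a₃,b₃],[c₃,d₃]]. If c₃ ≠ 0, then (a₂+d₂)/c + (a₃+d₃)/c₃ − (a₁+d₁)/c = 2/c₃ + c₃/c². -/
open Matrix

theorem three_term_trace_identity
    (A₁ A₂ A₃ : Matrix.SpecialLinearGroup (Fin 2) ℂ)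
    (c : ℂ) (hc : c ≠ 0)
    (hc1 : (A₁ : Matrix (Fin 2) (Fin 2) ℂ) 1 0 = c)
    (hc2 : (A₂ : Matrix (Fin 2) (Fin 2) ℂ) 1 0 = c)
    (hA3 : A₃ = A₂⁻¹ * A₁)
    (hc3 : (A₃ : Matrix (Fin 2) (Fin 2) ℂ) 1 0 ≠ 0) :
    ((A₂ : Matrix (Fin 2) (Fin 2) ℂ) 0 0 + (A₂ : Matrix (Fin 2) (Fin 2) ℂ) 1 1) / c
      + ((A₃ : Matrix (Fin 2) (Fin 2) ℂ) 0 0 + (A₃ : Matrix (Fin 2) (Fin 2) ℂ) 1 1)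
          / ((A₃ : Matrix (Fin 2) (Fin 2) ℂ) 1 0)
      - ((A₁ : Matrix (Fin 2) (Fin 2) ℂ) 0 0 + (A₁ : Matrix (Fin 2) (Fin 2) ℂ) 1 1) / c
    = 2 / ((A₃ : Matrix (Fin 2) (Fin 2) ℂ) 1 0)
      + ((A₃ : Matrix (Fin 2) (Fin 2) ℂ) 1 0) / c ^ 2 := by
  have hdet1 : (A₁ : Matrix (Fin 2) (Fin 2) ℂ).det = 1 := A₁.prop
  have hdet2 : (A₂ : Matrix (Fin 2) (Fin 2) ℂ).det = 1 := A₂.prop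
  rw [Matrix.det_fin_two] at hdet1 hdet2
  have hcoe : (A₃ : Matrix (Fin 2) (Fin 2) ℂ)
      = (A₂ : Matrix (Fin 2) (Fin 2) ℂ).adjugate * (A₁ : Matrix (Fin 2) (Fin 2) ℂ) := by
    rw [hA3]
    simp [Matrix.SpecialLinearGroup.coe_mul, Matrix.SpecialLinearGroup.coe_inv]
  have h00 := congrFun (congrFun hcoe 0) 0
  have h11 := congrFun (congrFun hcoe 1) 1
  have h10 := congrFun (congrFun hcoe 1) 0
  simp [Matrix.adjugate_fin_two, Matrix.mul_apply, Fin.sum_univ_two] at h00 h11 h10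
  simp only [hc1, hc2] at h00 h11 h10 hdet1 hdet2
  rw [h00, h11, h10]
  rw [h10] at hc3
  set a1 := (A₁ : Matrix (Fin 2) (Fin 2) ℂ) 0 0
  set b1 := (A₁ : Matrix (Fin 2) (Fin 2) ℂ) 0 1
  set d1 := (A₁ : Matrix (Fin 2) (Fin 2) ℂ) 1 1
  set a2 := (A₂ : Matrix (Fin 2) (Fin 2) ℂ) 0 0
  set b2 := (A₂ : Matrix (Fin 2) (Fin 2) ℂ) 0 1
  set d2 := (A₂ : Matrix (Fin 2) (Fin 2) ℂ) 1 1
  have ha : -a1 + a2 ≠ 0 := fun h => hc3 (by linear_combination c * h)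
  field_simp
  ring_nf
  ring_nf at hc3 hdet1 hdet2
  linear_combination hdet1 + hdet2
end

section
/- Let m be a nonzero integer and let p be a prime number with p ≡ 1 (mod 4|m|). Then the Legendre symbol (m | p) equals 1; in particular, m is a nonzero square modulo p. -/
/-!
By the reciprocity law in the form `J(m | b) = J(m | b mod 4|m|)` for odd `b`, the symbol
`(m | p)` equals `J(m | 1) = 1`. A symbol equal to `1` forces `m ≢ 0 (mod p)` and then says that `m` is a
square modulo `p`.
-/

theorem Nat.odd_of_intCast_modEq_one_four_mul {b : ℕ} {n : ℤ} (h : (b : ℤ) ≡ 1 [ZMOD 4 * n]) :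
    Odd b := by
  have h2 : (b : ℤ) ≡ 1 [ZMOD 2] := h.of_dvd (Dvd.intro (2 * n) (by ring))
  exact_mod_cast Int.odd_iff.mpr h2

theorem jacobiSym_eq_one_of_modEq_one (m : ℤ) {b : ℕ} (h : (b : ℤ) ≡ 1 [ZMOD 4 * |m|]) :
    jacobiSym m b = 1 := by
  have hmod : b % (4 * m.natAbs) = 1 % (4 * m.natAbs) := by
    rw [Int.abs_eq_natAbs] at h
    exact Int.natCast_modEq_iff.mp (by exact_mod_cast h)
  rw [jacobiSym.mod_right m (Nat.odd_of_intCast_modEq_one_four_mul h), hmod,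
    ← jacobiSym.mod_right m odd_one, jacobiSym.one_right]

theorem legendreSym_eq_one_of_modeq_general (m : ℤ)
    (p : ℕ) [Fact p.Prime] (hp : (p : ℤ) ≡ 1 [ZMOD 4 * |m|]) :
    legendreSym p m = 1 ∧ (m : ZMod p) ≠ 0 ∧ IsSquare (m : ZMod p) := by
  have hone : legendreSym p m = 1 := by
    rw [jacobiSym.legendreSym.to_jacobiSym]
    exact jacobiSym_eq_one_of_modEq_one m hp
  have hne : (m : ZMod p) ≠ 0 := fun h0 ↦ by
    simp [(legendreSym.eq_zero_iff p m).mpr h0] at hone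
  exact ⟨hone, hne, (legendreSym.eq_one_iff p hne).mp hone⟩

theorem legendreSym_eq_one_of_modeq (m : ℤ) (hm : m ≠ 0)
    (p : ℕ) [Fact p.Prime] (hp : (p : ℤ) ≡ 1 [ZMOD 4 * |m|]) :
    legendreSym p m = 1 ∧ (m : ZMod p) ≠ 0 ∧ IsSquare (m : ZMod p) :=
  legendreSym_eq_one_of_modeq_general m p hp
end

section
/- Let a, b, d be integers with gcd(a, b) = 1, gcd(b, 2d) = 1, b ≠ 0, d ≠ 0, and d² + 4b²d ≠ 0. Let p be a prime number with p ≡ 1 (mod 4(4b²d + d²)) and a·p ≡ 1 (mod b), and set e = (ap − 1)/b (an integer). Then there exists an integer k such that k·(k + e)·d ≡ 1 (mod p). -/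
/-!
Reducing modulo `p`, the relation `b e = a p - 1` becomes `b e = -1`, and the congruence
`k (k + e) d = 1` becomes the quadratic equation `d k² + d e k - 1 = 0`, whose discriminant
`d² e² + 4 d` equals `(d² + 4 b² d) / b²`. Since `p ≡ 1 (mod 4 m)` for `m = 4 b² d + d²`,
quadratic reciprocity (in the form `(m / p) = (m / p mod 4|m|)` for the Jacobi symbol) shows
that `m` is a square modulo `p`, so the quadratic equation has a root.
-/

theorem ZMod.isSquare_intCast_of_modEq_one {p : ℕ} [Fact p.Prime] {m : ℤ}
    (h : (p : ℤ) ≡ 1 [ZMOD 4 * m]) : IsSquare (m : ZMod p) := by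
  by_cases hm0 : (m : ZMod p) = 0
  · exact hm0 ▸ IsSquare.zero
  have hm : m ≠ 0 := by rintro rfl; simp at hm0
  have hmod : p ≡ 1 [MOD 4 * m.natAbs] := by
    rw [Int.modEq_iff_dvd, ← Int.natAbs_dvd] at h
    rw [Nat.modEq_iff_dvd]
    simpa [Int.natAbs_mul] using h
  have hodd : Odd p := by
    have h4 : p % 4 = 1 := Nat.ModEq.of_mul_right _ hmod
    exact Nat.odd_iff.mpr (by omega)
  have hjac : jacobiSym m p = 1 := by
    rw [jacobiSym.mod_right m hodd, hmod, Nat.mod_eq_of_lt (by omega), jacobiSym.one_right]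
  exact (legendreSym.eq_one_iff p hm0).mp (jacobiSym.legendreSym.to_jacobiSym p m ▸ hjac)

theorem Nat.Prime.not_intCast_dvd_of_modEq_one {p : ℕ} (hp : p.Prime) {n : ℤ}
    (h : (p : ℤ) ≡ 1 [ZMOD n]) : ¬ (p : ℤ) ∣ n := fun hpn ↦
  hp.not_dvd_one <| Int.natCast_dvd_natCast.mp <| by simpa using hpn.trans h.symm.dvd

theorem exists_mul_mul_add_eq_one {K : Type*} [Field K] [NeZero (2 : K)] {b d e : K}
    (hd : d ≠ 0) (hbe : b * e = -1) (hsq : IsSquare (4 * b ^ 2 * d + d ^ 2)) :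
    ∃ k, k * (k + e) * d = 1 := by
  obtain ⟨t, ht⟩ := hsq
  have hb : b ≠ 0 := left_ne_zero_of_mul (hbe ▸ neg_ne_zero.mpr one_ne_zero)
  have hdiscrim : discrim d (d * e) (-1) = t * b⁻¹ * (t * b⁻¹) := by
    have hbb : b * b⁻¹ = 1 := mul_inv_cancel₀ hb
    rw [discrim]
    linear_combination b⁻¹ ^ 2 * ht + d ^ 2 * b⁻¹ ^ 2 * (b * e - 1) * hbe
      - (4 * d + d ^ 2 * e ^ 2) * (b * b⁻¹ + 1) * hbb
  obtain ⟨k, hk⟩ := exists_quadratic_eq_zero hd ⟨_, hdiscrim⟩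
  exact ⟨k, by linear_combination hk⟩

theorem exists_k_modeq_general (a b d : ℤ)
    (p : ℕ) (hp : p.Prime)
    (hp1 : (p : ℤ) ≡ 1 [ZMOD 4 * (4 * b ^ 2 * d + d ^ 2)])
    (e : ℤ) (he : b * e = a * (p : ℤ) - 1) :
    ∃ k : ℤ, k * (k + e) * d ≡ 1 [ZMOD (p : ℤ)] := by
  have : Fact p.Prime := ⟨hp⟩
  have h4m : ((4 * (4 * b ^ 2 * d + d ^ 2) : ℤ) : ZMod p) ≠ 0 := by
    rw [Ne, ZMod.intCast_zmod_eq_zero_iff_dvd]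
    exact hp.not_intCast_dvd_of_modEq_one hp1
  have h4m' : (2 : ZMod p) * 2 * d * (4 * b ^ 2 + d) ≠ 0 := by
    convert h4m using 1
    push_cast
    ring
  simp only [mul_ne_zero_iff] at h4m'
  obtain ⟨⟨⟨h2, -⟩, hd⟩, -⟩ := h4m'
  have hbe : (b : ZMod p) * e = -1 := by
    simpa using congrArg (fun x : ℤ ↦ (x : ZMod p)) he
  have : NeZero (2 : ZMod p) := ⟨h2⟩
  obtain ⟨k₀, hk₀⟩ := exists_mul_mul_add_eq_one hd hbe
    (by exact_mod_cast ZMod.isSquare_intCast_of_modEq_one hp1)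
  obtain ⟨k, rfl⟩ := ZMod.intCast_surjective k₀
  exact ⟨k, (ZMod.intCast_eq_intCast_iff _ _ _).mp (by push_cast; exact hk₀)⟩

theorem exists_k_modeq (a b d : ℤ)
    (hab : Int.gcd a b = 1) (hbd : Int.gcd b (2 * d) = 1)
    (hb : b ≠ 0) (hd : d ≠ 0) (hdd : d ^ 2 + 4 * b ^ 2 * d ≠ 0)
    (p : ℕ) (hp : p.Prime)
    (hp1 : (p : ℤ) ≡ 1 [ZMOD 4 * (4 * b ^ 2 * d + d ^ 2)])
    (hap : a * (p : ℤ) ≡ 1 [ZMOD b])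
    (e : ℤ) (he : b * e = a * (p : ℤ) - 1) :
    ∃ k : ℤ, k * (k + e) * d ≡ 1 [ZMOD (p : ℤ)] :=
  exists_k_modeq_general a b d p hp hp1 e he
end
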